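/- For fixed t > 0, the function p_t(x) = 2x·arcosh(cos(π/x)/sin(((x−2)π − t)/(2x))) is strictly decreasing in x on (t/π + 2, ∞). -/

import Mathlib

open Real

noncomputable def arcosh (x : ℝ) : ℝ := Real.log (x + Real.sqrt (x ^ 2 - 1))

lemma hasDerivAt_arcosh {y : ℝ} (hy : 1 < y) :
    HasDerivAt _root_.arcosh (1 / Real.sqrt (y ^ 2 - 1)) y := by
  have h1 : (0:ℝ) < y ^ 2 - 1 := by nlinarith
  have hs : 0 < Real.sqrt (y ^ 2 - 1) := Real.sqrt_pos.2 h1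
  have d1 : HasDerivAt (fun z : ℝ => z ^ 2 - 1) (2 * y) y := by
    simpa using (hasDerivAt_pow 2 y).sub_const 1
  have d2 : HasDerivAt (fun z : ℝ => Real.sqrt (z ^ 2 - 1))
      (1 / (2 * Real.sqrt (y ^ 2 - 1)) * (2 * y)) y :=
    (Real.hasDerivAt_sqrt (ne_of_gt h1)).comp y d1
  have d3 : HasDerivAt (fun z : ℝ => z + Real.sqrt (z ^ 2 - 1))
      (1 + 1 / (2 * Real.sqrt (y ^ 2 - 1)) * (2 * y)) y := (hasDerivAt_id y).add d2
  have hpos : y + Real.sqrt (y ^ 2 - 1) ≠ 0 := by positivity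
  have d4 := d3.log hpos
  refine HasDerivAt.congr_deriv d4 ?_
  have hsq : Real.sqrt (y ^ 2 - 1) ^ 2 = y ^ 2 - 1 := Real.sq_sqrt h1.le
  field_simp
  nlinarith [hs, hsq]

lemma sin_div_lt {m p u : ℝ} (hm : 0 < m) (hmp : m < p) (hu : 0 < u) (hpu : p * u < π) :
    m * Real.sin (p * u) < p * Real.sin (m * u) := by
  have hp : 0 < p := hm.trans hmp
  have h0 : (0:ℝ) ∈ Set.Icc 0 π := by constructor <;> positivity
  have h1 : p * u ∈ Set.Icc 0 π := ⟨by positivity, hpu.le⟩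
  have hne : p * u ≠ (0:ℝ) := by positivity
  have ha : (0:ℝ) < m / p := by positivity
  have hb : (0:ℝ) < 1 - m / p := by
    have : m / p < 1 := (div_lt_one hp).2 hmp
    linarith
  have hab : m / p + (1 - m / p) = 1 := by ring
  have key := strictConcaveOn_sin_Icc.2 h1 h0 hne ha hb hab
  simp only [smul_eq_mul, Real.sin_zero, mul_zero, add_zero] at key
  have harg : m / p * (p * u) = m * u := by field_simp
  rw [harg, div_mul_eq_mul_div, div_lt_iff₀ hp] at key
  linarith

lemma cross_pos {m p u : ℝ} (hm : 0 < m) (hmp : m < p) (hu : 0 < u) (hpu : p * u < π) :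
    p * Real.sin (m * u) * Real.cos (p * u) < m * Real.cos (m * u) * Real.sin (p * u) := by
  have hp : 0 < p := hm.trans hmp
  set F : ℝ → ℝ := fun w => m * Real.cos (m * w) * Real.sin (p * w)
      - p * Real.sin (m * w) * Real.cos (p * w) with hF
  have hder : ∀ w : ℝ, HasDerivAt F ((p ^ 2 - m ^ 2) * Real.sin (m * w) * Real.sin (p * w)) w := by
    intro w
    have dm : HasDerivAt (fun w : ℝ => m * w) m w := by
      simpa using (hasDerivAt_id w).const_mul m
    have dp : HasDerivAt (fun w : ℝ => p * w) p w := by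
      simpa using (hasDerivAt_id w).const_mul p
    have d1 := ((dm.cos.const_mul m).mul dp.sin).sub ((dm.sin.const_mul p).mul dp.cos)
    refine HasDerivAt.congr_deriv d1 ?_
    ring
  have hmono : StrictMonoOn F (Set.Icc 0 u) := by
    apply strictMonoOn_of_deriv_pos (convex_Icc 0 u)
    · exact fun w _ => (hder w).continuousAt.continuousWithinAt
    · intro w hw
      rw [interior_Icc] at hw
      rw [(hder w).deriv]
      have hw1 : 0 < w := hw.1
      have hw2 : w < u := hw.2
      have h1 : 0 < Real.sin (m * w) := by
        apply Real.sin_pos_of_pos_of_lt_pi (by positivity)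
        nlinarith
      have h2 : 0 < Real.sin (p * w) := by
        apply Real.sin_pos_of_pos_of_lt_pi (by positivity)
        nlinarith
      have h3 : 0 < p ^ 2 - m ^ 2 := by nlinarith
      positivity
  have key := hmono (Set.left_mem_Icc.2 hu.le) (Set.right_mem_Icc.2 hu.le) hu
  simp only [hF, mul_zero, Real.cos_zero, Real.sin_zero] at key
  linarith

lemma ratio_lt {m p c u v : ℝ} (hm : 0 < m) (hmp : m < p) (hc : p * c ≤ π)
    (hu : 0 < u) (huv : u < v) (hv : v < c) :
    Real.sin (m * u) * Real.sin (p * v) < Real.sin (m * v) * Real.sin (p * u) := by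
  have hp : 0 < m := hm
  have hp' : 0 < p := hm.trans hmp
  have hsin : ∀ w : ℝ, 0 < w → w < c → 0 < Real.sin (p * w) := by
    intro w h1 h2
    apply Real.sin_pos_of_pos_of_lt_pi (by positivity)
    calc p * w < p * c := by nlinarith
    _ ≤ π := hc
  have hd : ∀ w ∈ Set.Ioo (0:ℝ) c, HasDerivAt (fun w => Real.sin (m * w) / Real.sin (p * w))
      ((m * Real.cos (m * w) * Real.sin (p * w) - Real.sin (m * w) * (p * Real.cos (p * w)))
        / Real.sin (p * w) ^ 2) w := by
    intro w hw
    have hspw := hsin w hw.1 hw.2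
    have dm : HasDerivAt (fun w : ℝ => m * w) m w := by
      simpa using (hasDerivAt_id w).const_mul m
    have dp : HasDerivAt (fun w : ℝ => p * w) p w := by
      simpa using (hasDerivAt_id w).const_mul p
    have d := (dm.sin).div (dp.sin) (ne_of_gt hspw)
    refine HasDerivAt.congr_deriv d ?_
    ring
  have hmono : StrictMonoOn (fun w => Real.sin (m * w) / Real.sin (p * w)) (Set.Ioo 0 c) := by
    apply strictMonoOn_of_deriv_pos (convex_Ioo 0 c)
    · intro w hw
      exact (hd w hw).continuousAt.continuousWithinAt
    · intro w hw
      rw [interior_Ioo] at hw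
      have hspw := hsin w hw.1 hw.2
      rw [(hd w hw).deriv]
      apply div_pos
      · have := cross_pos hm hmp hw.1 (by nlinarith [hw.2])
        nlinarith
      · positivity
  have key := hmono (Set.mem_Ioo.2 ⟨hu, huv.trans hv⟩) (Set.mem_Ioo.2 ⟨hu.trans huv, hv⟩) huv
  simp only at key
  rw [div_lt_div_iff₀ (hsin u hu (huv.trans hv)) (hsin v (hu.trans huv) hv)] at key
  linarith

lemma hasDerivAt_h {B u : ℝ} (hB : π < B) (hu : 0 < u) (huc : u < π / (2 * B)) :
    HasDerivAt (fun w => _root_.arcosh (Real.cos (π * w) / Real.cos (B * w)))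
      (((B - π) * Real.sqrt (Real.sin ((B + π) * u)) / Real.sqrt (Real.sin ((B - π) * u))
        + (B + π) * Real.sqrt (Real.sin ((B - π) * u)) / Real.sqrt (Real.sin ((B + π) * u)))
        / (2 * Real.cos (B * u))) u := by
  have hπ : (0:ℝ) < π := Real.pi_pos
  have hB0 : 0 < B := hπ.trans hB
  have hBu2 : B * u < π / 2 := by
    have := (lt_div_iff₀ (by positivity)).1 huc
    nlinarith
  have hπu : 0 < π * u := by positivity
  have hπuBu : π * u < B * u := by nlinarith
  have hcB : 0 < Real.cos (B * u) := Real.cos_pos_of_mem_Ioo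
    ⟨by nlinarith, hBu2⟩
  have hcπ : Real.cos (B * u) < Real.cos (π * u) :=
    Real.cos_lt_cos_of_nonneg_of_le_pi (by positivity) (by nlinarith) hπuBu
  have hy : 1 < Real.cos (π * u) / Real.cos (B * u) := (one_lt_div hcB).2 hcπ
  -- sin positivity for m := B - π and p := B + π
  have hsm : 0 < Real.sin ((B - π) * u) := by
    apply Real.sin_pos_of_pos_of_lt_pi (by nlinarith)
    nlinarith
  have hsp : 0 < Real.sin ((B + π) * u) := by
    apply Real.sin_pos_of_pos_of_lt_pi (by nlinarith)
    have : (B + π) * u < 2 * B * u := by nlinarith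
    nlinarith
  -- inner derivative
  have dπ : HasDerivAt (fun w : ℝ => π * w) π u := by
    simpa using (hasDerivAt_id u).const_mul π
  have dB : HasDerivAt (fun w : ℝ => B * w) B u := by
    simpa using (hasDerivAt_id u).const_mul B
  have dInner := (dπ.cos).div (dB.cos) (ne_of_gt hcB)
  have dh := (_root_.hasDerivAt_arcosh hy).comp u dInner
  refine HasDerivAt.congr_deriv dh ?_
  -- now value equality
  have hid1 : Real.cos (π * u) ^ 2 - Real.cos (B * u) ^ 2
      = Real.sin ((B - π) * u) * Real.sin ((B + π) * u) := by
    have e1 : (B - π) * u = B * u - π * u := by ring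
    have e2 : (B + π) * u = B * u + π * u := by ring
    rw [e1, e2, Real.sin_sub, Real.sin_add]
    linear_combination (Real.cos (B * u))^2 * Real.sin_sq_add_cos_sq (π * u)
      - (Real.cos (π * u))^2 * Real.sin_sq_add_cos_sq (B * u)
  have hid2 : -Real.sin (π * u) * π * Real.cos (B * u)
      - Real.cos (π * u) * (-Real.sin (B * u) * B)
      = ((B - π) * Real.sin ((B + π) * u) + (B + π) * Real.sin ((B - π) * u)) / 2 := by
    have e1 : (B - π) * u = B * u - π * u := by ring
    have e2 : (B + π) * u = B * u + π * u := by ring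
    rw [e1, e2, Real.sin_sub, Real.sin_add]
    ring
  have hsq : Real.sqrt ((Real.cos (π * u) / Real.cos (B * u)) ^ 2 - 1)
      = Real.sqrt (Real.sin ((B - π) * u)) * Real.sqrt (Real.sin ((B + π) * u))
        / Real.cos (B * u) := by
    have e : (Real.cos (π * u) / Real.cos (B * u)) ^ 2 - 1
        = (Real.sqrt (Real.sin ((B - π) * u)) * Real.sqrt (Real.sin ((B + π) * u))
          / Real.cos (B * u)) ^ 2 := by
      have e2 : (Real.sqrt (Real.sin ((B - π) * u)) * Real.sqrt (Real.sin ((B + π) * u))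
          / Real.cos (B * u)) ^ 2
          = Real.sin ((B - π) * u) * Real.sin ((B + π) * u) / Real.cos (B * u) ^ 2 := by
        rw [div_pow, mul_pow, Real.sq_sqrt hsm.le, Real.sq_sqrt hsp.le]
      rw [e2]
      rw [div_pow, div_sub_one (pow_ne_zero 2 (ne_of_gt hcB)), hid1]
    rw [e]
    exact Real.sqrt_sq (by positivity)
  rw [hsq, hid2]
  have ha2 := Real.sq_sqrt hsm.le
  have hb2 := Real.sq_sqrt hsp.le
  set a := Real.sqrt (Real.sin ((B - π) * u)) with hadef
  set b := Real.sqrt (Real.sin ((B + π) * u)) with hbdef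
  have ha : a ≠ 0 := by rw [hadef]; positivity
  have hb : b ≠ 0 := by rw [hbdef]; positivity
  have hcB' : Real.cos (B * u) ≠ 0 := ne_of_gt hcB
  rw [← ha2, ← hb2]
  field_simp

set_option maxHeartbeats 1000000 in
lemma D_mono {B : ℝ} (hB : π < B) :
    StrictMonoOn (fun w => ((B - π) * Real.sqrt (Real.sin ((B + π) * w)) / Real.sqrt (Real.sin ((B - π) * w))
        + (B + π) * Real.sqrt (Real.sin ((B - π) * w)) / Real.sqrt (Real.sin ((B + π) * w)))
        / (2 * Real.cos (B * w))) (Set.Ioo 0 (π / (2 * B))) := by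
  have hπ : (0:ℝ) < π := Real.pi_pos
  have hB0 : 0 < B := hπ.trans hB
  have hm : (0:ℝ) < B - π := by linarith
  have hmp : B - π < B + π := by linarith
  have hc : (B + π) * (π / (2 * B)) ≤ π := by
    rw [mul_div_assoc', div_le_iff₀ (by positivity)]
    nlinarith
  intro u hu v hv huv
  obtain ⟨hu0, huc⟩ := hu
  obtain ⟨hv0, hvc⟩ := hv
  have hpu : (B + π) * u < π := lt_of_lt_of_le (by nlinarith) hc
  have hpv : (B + π) * v < π := lt_of_lt_of_le (by nlinarith) hc
  have hsmu : 0 < Real.sin ((B - π) * u) :=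
    Real.sin_pos_of_pos_of_lt_pi (by positivity) (by nlinarith)
  have hspu : 0 < Real.sin ((B + π) * u) :=
    Real.sin_pos_of_pos_of_lt_pi (by positivity) hpu
  have hsmv : 0 < Real.sin ((B - π) * v) :=
    Real.sin_pos_of_pos_of_lt_pi (by positivity) (by nlinarith)
  have hspv : 0 < Real.sin ((B + π) * v) :=
    Real.sin_pos_of_pos_of_lt_pi (by positivity) hpv
  have hcv : 0 < Real.cos (B * v) := Real.cos_pos_of_mem_Ioo
    ⟨by nlinarith, by rw [lt_div_iff₀ (by positivity)] at hvc; nlinarith⟩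
  have hcu : 0 < Real.cos (B * u) := Real.cos_pos_of_mem_Ioo
    ⟨by nlinarith, by rw [lt_div_iff₀ (by positivity)] at huc; nlinarith⟩
  have hcvu : Real.cos (B * v) < Real.cos (B * u) := by
    apply Real.cos_lt_cos_of_nonneg_of_le_pi (by positivity) (by nlinarith) (by nlinarith)
  set a1 := Real.sqrt (Real.sin ((B - π) * u)) with ha1d
  set b1 := Real.sqrt (Real.sin ((B + π) * u)) with hb1d
  set a2 := Real.sqrt (Real.sin ((B - π) * v)) with ha2d
  set b2 := Real.sqrt (Real.sin ((B + π) * v)) with hb2d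
  have ha1 : 0 < a1 := Real.sqrt_pos.2 hsmu
  have hb1 : 0 < b1 := Real.sqrt_pos.2 hspu
  have ha2 : 0 < a2 := Real.sqrt_pos.2 hsmv
  have hb2 : 0 < b2 := Real.sqrt_pos.2 hspv
  have ha1s : a1 ^ 2 = Real.sin ((B - π) * u) := Real.sq_sqrt hsmu.le
  have hb1s : b1 ^ 2 = Real.sin ((B + π) * u) := Real.sq_sqrt hspu.le
  have ha2s : a2 ^ 2 = Real.sin ((B - π) * v) := Real.sq_sqrt hsmv.le
  have hb2s : b2 ^ 2 = Real.sin ((B + π) * v) := Real.sq_sqrt hspv.le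
  -- cross inequality from ratio_lt
  have hcross : a1 * b2 < a2 * b1 := by
    have h1 : (a1 * b2) ^ 2 < (a2 * b1) ^ 2 := by
      rw [mul_pow, mul_pow, ha1s, hb1s, ha2s, hb2s]
      exact ratio_lt hm hmp hc hu0 huv hvc
    nlinarith [mul_pos ha1 hb2, mul_pos ha2 hb1]
  -- lower bound on r1
  have hlow : (B - π) * b1 ^ 2 < (B + π) * a1 ^ 2 := by
    rw [ha1s, hb1s]
    exact sin_div_lt hm hmp hu0 hpu
  -- second factor positivity
  have hsec : (B - π) * (b1 * b2) < (B + π) * (a1 * a2) := by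
    have s1 : (B + π) * a1 * (a1 * b2) < (B + π) * a1 * (a2 * b1) :=
      mul_lt_mul_of_pos_left hcross (by positivity)
    have s2 : (B - π) * b1 ^ 2 * b2 < (B + π) * a1 ^ 2 * b2 :=
      mul_lt_mul_of_pos_right hlow hb2
    have s3 : (B - π) * (b1 * b2) * b1 < (B + π) * (a1 * a2) * b1 := by
      calc (B - π) * (b1 * b2) * b1 = (B - π) * b1 ^ 2 * b2 := by ring
        _ < (B + π) * a1 ^ 2 * b2 := s2
        _ = (B + π) * a1 * (a1 * b2) := by ring
        _ < (B + π) * a1 * (a2 * b1) := s1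
        _ = (B + π) * (a1 * a2) * b1 := by ring
    exact lt_of_mul_lt_mul_right s3 hb1.le
  -- bracket inequality
  have hbr : (B - π) * b1 / a1 + (B + π) * a1 / b1
      < (B - π) * b2 / a2 + (B + π) * a2 / b2 := by
    rw [div_add_div _ _ (ne_of_gt ha1) (ne_of_gt hb1),
      div_add_div _ _ (ne_of_gt ha2) (ne_of_gt hb2),
      div_lt_div_iff₀ (mul_pos ha1 hb1) (mul_pos ha2 hb2)]
    nlinarith [mul_pos (sub_pos.2 hcross) (sub_pos.2 hsec)]
  have hbrpos : 0 < (B - π) * b1 / a1 + (B + π) * a1 / b1 := by positivity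
  simp only
  calc ((B - π) * b1 / a1 + (B + π) * a1 / b1) / (2 * Real.cos (B * u))
      < ((B - π) * b1 / a1 + (B + π) * a1 / b1) / (2 * Real.cos (B * v)) := by
        apply div_lt_div_of_pos_left hbrpos (by positivity) (by linarith)
    _ ≤ ((B - π) * b2 / a2 + (B + π) * a2 / b2) / (2 * Real.cos (B * v)) :=
        (div_le_div_iff_of_pos_right (by positivity)).2 hbr.le

lemma q_mono {B : ℝ} (hB : π < B) :
    StrictMonoOn (fun u => _root_.arcosh (Real.cos (π * u) / Real.cos (B * u)) / u)
      (Set.Ioo 0 (π / (2 * B))) := by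
  have hπ : (0:ℝ) < π := Real.pi_pos
  have hB0 : 0 < B := hπ.trans hB
  have hcpos : ∀ w ∈ Set.Ico (0:ℝ) (π / (2 * B)), 0 < Real.cos (B * w) := by
    intro w hw
    apply Real.cos_pos_of_mem_Ioo
    constructor
    · nlinarith [hw.1]
    · have := hw.2
      rw [lt_div_iff₀ (by positivity)] at this
      nlinarith [hw.1]
  -- continuity of h on Ico
  have hcont : ContinuousOn (fun w => _root_.arcosh (Real.cos (π * w) / Real.cos (B * w)))
      (Set.Ico 0 (π / (2 * B))) := by
    have hy : ContinuousOn (fun w => Real.cos (π * w) / Real.cos (B * w))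
        (Set.Ico 0 (π / (2 * B))) := by
      apply ContinuousOn.div
      · exact (Real.continuous_cos.comp (continuous_const.mul continuous_id)).continuousOn
      · exact (Real.continuous_cos.comp (continuous_const.mul continuous_id)).continuousOn
      · exact fun w hw => ne_of_gt (hcpos w hw)
    have hyge : ∀ w ∈ Set.Ico (0:ℝ) (π / (2 * B)),
        1 ≤ Real.cos (π * w) / Real.cos (B * w) := by
      intro w hw
      rw [le_div_iff₀ (hcpos w hw)]
      rw [one_mul]
      apply Real.cos_le_cos_of_nonneg_of_le_pi (by nlinarith [hw.1]) ?_ (by nlinarith [hw.1])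
      have := hw.2
      rw [lt_div_iff₀ (by positivity)] at this
      nlinarith [hw.1]
    unfold _root_.arcosh
    apply ContinuousOn.log
    · exact hy.add (((hy.pow 2).sub continuousOn_const).sqrt)
    · intro w hw
      have h1 := hyge w hw
      have h2 : 0 ≤ Real.sqrt ((Real.cos (π * w) / Real.cos (B * w)) ^ 2 - 1) :=
        Real.sqrt_nonneg _
      positivity
  -- strict convexity
  have hconv : StrictConvexOn ℝ (Set.Ico 0 (π / (2 * B)))
      (fun w => _root_.arcosh (Real.cos (π * w) / Real.cos (B * w))) := by
    apply StrictMonoOn.strictConvexOn_of_deriv (convex_Ico _ _) hcont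
    rw [interior_Ico]
    intro u hu v hv huv
    rw [(hasDerivAt_h hB hu.1 hu.2).deriv, (hasDerivAt_h hB hv.1 hv.2).deriv]
    exact D_mono hB hu hv huv
  -- slope argument
  intro u hu v hv huv
  obtain ⟨hu0, huc⟩ := hu
  obtain ⟨hv0, hvc⟩ := hv
  have h0 : _root_.arcosh (Real.cos (π * 0) / Real.cos (B * 0)) = 0 := by
    simp [_root_.arcosh]
  have mem0 : (0:ℝ) ∈ Set.Ico (0:ℝ) (π / (2 * B)) := ⟨le_refl _, by positivity⟩
  have memv : v ∈ Set.Ico (0:ℝ) (π / (2 * B)) := ⟨hv0.le, hvc⟩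
  have ha : (0:ℝ) < 1 - u / v := by
    have : u / v < 1 := (div_lt_one hv0).2 huv
    linarith
  have hb : (0:ℝ) < u / v := by positivity
  have key := hconv.2 mem0 memv (by intro h; exact absurd h.symm (ne_of_gt hv0)) ha hb (by ring)
  simp only [smul_eq_mul, mul_zero, add_zero] at key
  have harg : (0:ℝ) + u / v * v = u := by field_simp; ring
  have h1 : _root_.arcosh (Real.cos 0 / Real.cos 0) = 0 := by simp [_root_.arcosh]
  rw [harg, h1, mul_zero, zero_add] at key
  simp only
  rw [div_lt_div_iff₀ hu0 hv0]
  have : u / v * _root_.arcosh (Real.cos (π * v) / Real.cos (B * v))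
      = u * _root_.arcosh (Real.cos (π * v) / Real.cos (B * v)) / v := by ring
  rw [this] at key
  rw [lt_div_iff₀ hv0] at key
  linarith

theorem stmt_7 (t : ℝ) (ht : 0 < t) :
    StrictAntiOn
      (fun x : ℝ =>
        2 * x * _root_.arcosh (Real.cos (π / x) / Real.sin (((x - 2) * π - t) / (2 * x))))
      (Set.Ioi (t / π + 2)) := by
  have hπ : (0:ℝ) < π := Real.pi_pos
  set B : ℝ := π + t / 2 with hBdef
  have hB : π < B := by rw [hBdef]; linarith
  have hB0 : 0 < B := hπ.trans hB
  have hxpos : ∀ x ∈ Set.Ioi (t / π + 2), 0 < x := by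
    intro x hx
    have : 0 < t / π := by positivity
    have := Set.mem_Ioi.1 hx
    linarith
  have hmem : ∀ x ∈ Set.Ioi (t / π + 2), 1 / x ∈ Set.Ioo 0 (π / (2 * B)) := by
    intro x hx
    have hx0 := hxpos x hx
    constructor
    · positivity
    · rw [div_lt_div_iff₀ hx0 (by positivity), one_mul]
      have hxgt := Set.mem_Ioi.1 hx
      have h3 : π * (t / π + 2) = t + 2 * π := by field_simp
      have h4 : 2 * B = t + 2 * π := by rw [hBdef]; ring
      linarith [mul_lt_mul_of_pos_left hxgt hπ]
  have hrew : ∀ x ∈ Set.Ioi (t / π + 2),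
      2 * x * _root_.arcosh (Real.cos (π / x) / Real.sin (((x - 2) * π - t) / (2 * x)))
        = 2 * (_root_.arcosh (Real.cos (π * (1 / x)) / Real.cos (B * (1 / x))) / (1 / x)) := by
    intro x hx
    have hx0 := hxpos x hx
    have e1 : ((x - 2) * π - t) / (2 * x) = π / 2 - B * (1 / x) := by
      rw [hBdef]; field_simp; ring
    have e2 : π / x = π * (1 / x) := by ring
    have e3 : _root_.arcosh (Real.cos (π * (1 / x)) / Real.cos (B * (1 / x))) / (1 / x)
        = _root_.arcosh (Real.cos (π * (1 / x)) / Real.cos (B * (1 / x))) * x := by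
      field_simp
    rw [e1, Real.sin_pi_div_two_sub, e2, e3]
    ring
  intro x1 hx1 x2 hx2 h12
  have hu1 := hmem x1 hx1
  have hu2 := hmem x2 hx2
  have hlt : 1 / x2 < 1 / x1 :=
    one_div_lt_one_div_of_lt (hxpos x1 hx1) h12
  have key := q_mono hB hu2 hu1 hlt
  simp only at key
  simp only [hrew x1 hx1, hrew x2 hx2]
  linarith
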